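/- arXiv:0908.1669 — 5 statements merged into one kernel-verified Lean document; each statement's English description precedes it below -/
import Mathlib

section
/- If C is a linear code over GF(q) whose dual code C⊥ has exactly s' distinct nonzero weights, then the covering radius of C satisfies ρ(C) ≤ s' (Delsarte's external distance bound). -/
/-!
Let `W` be the set of nonzero weights of `C⊥` and `f u := ∏_{w ∈ W} (wt u - w)`, so that `f`
vanishes on `C⊥ \ {0}` but `f 0 ≠ 0`. By Poisson summation the Fourier transform `f̂` of `f`
sums to `|C| f 0 ≠ 0` over every coset `v + C`, so `f̂ (v + c) ≠ 0` for some `c ∈ C`. On the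
other hand `f` is a polynomial of degree `|W|` in the weight, hence a linear combination of
functions depending on at most `|W|` coordinates, and the Fourier transform of such a function
vanishes at every `y` of weight `> |W|`. Therefore `wt (v + c) ≤ |W|`.
-/

/-- The dual code of a linear code `C ⊆ F^n` w.r.t. the standard bilinear form. -/
def dualCode {F : Type*} [Field F] {n : ℕ} (C : Submodule F (Fin n → F)) :
    Submodule F (Fin n → F) where
  carrier := {v | ∀ c ∈ C, ∑ i, v i * c i = 0}
  zero_mem' := by intro c hc; simp
  add_mem' := by
    intro a b ha hb c hc
    simp [Pi.add_apply, add_mul, Finset.sum_add_distrib, ha c hc, hb c hc]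
  smul_mem' := by
    intro r a ha c hc
    simp [Pi.smul_apply, smul_eq_mul, mul_assoc, ← Finset.mul_sum, ha c hc]

/-- The covering radius of a linear code: the largest distance from a vector to the code. -/
noncomputable def coveringRadius {F : Type*} [Field F] [Fintype F] [DecidableEq F] {n : ℕ}
    (C : Submodule F (Fin n → F)) : ℕ :=
  sSup {r | ∃ v : Fin n → F, r = sInf {d | ∃ c ∈ C, hammingDist v c = d}}

open Finset Matrix Polynomial

lemma AddChar.exists_apply_mul_ne_one {F M : Type*} [DivisionRing F] [Monoid M]
    {ψ : AddChar F M} (hψ : ψ ≠ 0) {x : F} (hx : x ≠ 0) : ∃ a, ψ (a * x) ≠ 1 := by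
  obtain ⟨b, hb⟩ := AddChar.ne_zero_iff.1 hψ
  exact ⟨b * x⁻¹, by rwa [inv_mul_cancel_right₀ hx]⟩

lemma natCast_hammingNorm_eq_sum {ι R : Type*} [Fintype ι] {β : ι → Type*}
    [∀ i, Zero (β i)] [∀ i, DecidableEq (β i)] [AddCommMonoidWithOne R] (x : ∀ i, β i) :
    (hammingNorm x : R) = ∑ i, if x i = 0 then 0 else 1 := by
  simp [hammingNorm, card_filter, ite_not]

section Junta

variable (F : Type*) (n : ℕ)

def juntaSpan (d : ℕ) : Submodule ℂ ((Fin n → F) → ℂ) :=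
  Submodule.span ℂ {f | ∃ J : Finset (Fin n), #J ≤ d ∧ DependsOn f (J : Set (Fin n))}

lemma juntaSpan_mono : Monotone (juntaSpan F n) := fun _ _ hde =>
  Submodule.span_mono fun _ ⟨J, hJ, hf⟩ => ⟨J, hJ.trans hde, hf⟩

variable {F n} [Zero F] [DecidableEq F]

lemma hammingNorm_mul_mem_juntaSpan {d : ℕ} {f : (Fin n → F) → ℂ}
    (hf : f ∈ juntaSpan F n d) :
    (fun u => (hammingNorm u : ℂ)) * f ∈ juntaSpan F n (d + 1) := by
  induction hf using Submodule.span_induction with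
  | mem f hf =>
    obtain ⟨J, hJ, hfJ⟩ := hf
    have hsum : (fun u => (hammingNorm u : ℂ)) * f =
        ∑ i, fun u => (if u i = 0 then 0 else 1) * f u := by
      ext u
      simp [natCast_hammingNorm_eq_sum, Finset.sum_apply, sum_mul]
    rw [hsum]
    refine sum_mem fun i _ => Submodule.subset_span
      ⟨insert i J, (card_insert_le i J).trans (by omega), fun x y hxy => ?_⟩
    simp only [coe_insert, Set.mem_insert_iff, forall_eq_or_imp] at hxy
    dsimp only
    rw [hxy.1, hfJ hxy.2]
  | zero => simp
  | add f g _ _ hf hg => simpa [mul_add] using add_mem hf hg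
  | smul a f _ hf => simpa [mul_smul_comm] using Submodule.smul_mem _ a hf

lemma hammingNorm_pow_mem_juntaSpan (k : ℕ) :
    (fun u => (hammingNorm u : ℂ)) ^ k ∈ juntaSpan F n k := by
  induction k with
  | zero => exact Submodule.subset_span ⟨∅, by simp, fun _ _ _ => rfl⟩
  | succ k ih => simpa [pow_succ'] using hammingNorm_mul_mem_juntaSpan ih

lemma eval_hammingNorm_mem_juntaSpan {p : ℂ[X]} {d : ℕ} (hp : p.natDegree ≤ d) :
    (fun u : Fin n → F => p.eval (hammingNorm u : ℂ)) ∈ juntaSpan F n d := by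
  have hsum : (fun u : Fin n → F => p.eval (hammingNorm u : ℂ)) =
      ∑ k ∈ range (d + 1), p.coeff k • (fun u => (hammingNorm u : ℂ)) ^ k := by
    ext u
    simp [eval_eq_sum_range' (Nat.lt_succ_of_le hp), Finset.sum_apply]
  rw [hsum]
  exact sum_mem fun k hk => Submodule.smul_mem _ _ <|
    juntaSpan_mono F n (Nat.lt_succ_iff.1 (mem_range.1 hk)) (hammingNorm_pow_mem_juntaSpan k)

end Junta

section Fourier

variable {F : Type*} [Field F] [Fintype F] {n : ℕ}

def dotFourier (ψ : AddChar F ℂ) (f : (Fin n → F) → ℂ) (y : Fin n → F) : ℂ :=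
  ∑ u, f u * ψ (u ⬝ᵥ y)

lemma dotFourier_eq_zero_of_dependsOn {ψ : AddChar F ℂ} (hψ : ψ ≠ 0) {f : (Fin n → F) → ℂ}
    {J : Set (Fin n)} (hf : DependsOn f J) {y : Fin n → F} {i : Fin n} (hi : i ∉ J)
    (hy : y i ≠ 0) : dotFourier ψ f y = 0 := by
  obtain ⟨a, ha⟩ := AddChar.exists_apply_mul_ne_one hψ hy
  -- translating `u` by `a • eᵢ` fixes `f` and multiplies the character by `ψ (a * y i) ≠ 1`
  refine eq_zero_of_mul_eq_self_left ha ?_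
  rw [dotFourier, mul_sum]
  refine Fintype.sum_equiv (Equiv.addRight (Pi.single i a)) _ _ fun u => ?_
  have hfu : f (u + Pi.single i a) = f u :=
    hf fun j hj => by simp [ne_of_mem_of_not_mem hj hi]
  simp only [Equiv.coe_addRight, hfu, add_dotProduct, single_dotProduct,
    AddChar.map_add_eq_mul]
  ring

variable [DecidableEq F]

lemma dotFourier_eq_zero_of_mem_juntaSpan {ψ : AddChar F ℂ} (hψ : ψ ≠ 0) {d : ℕ}
    {f : (Fin n → F) → ℂ} (hf : f ∈ juntaSpan F n d) {y : Fin n → F}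
    (hy : d < hammingNorm y) : dotFourier ψ f y = 0 := by
  induction hf using Submodule.span_induction with
  | mem f hf =>
    obtain ⟨J, hJ, hfJ⟩ := hf
    obtain ⟨i, hyi, hiJ⟩ : ∃ i, y i ≠ 0 ∧ i ∉ J := by
      by_contra! h
      have : hammingNorm y ≤ #J := card_le_card fun i hi => h i (mem_filter.1 hi).2
      omega
    exact dotFourier_eq_zero_of_dependsOn hψ hfJ (mod_cast hiJ) hyi
  | zero => simp [dotFourier]
  | add f g _ _ hf hg => simp_all [dotFourier, add_mul, sum_add_distrib]
  | smul a f _ hf => simp_all [dotFourier, mul_assoc, ← mul_sum]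

end Fourier

section Code

variable {F : Type*} [Field F] {n : ℕ} {C : Submodule F (Fin n → F)}

lemma sum_addChar_dotProduct_eq_zero_of_notMem_dualCode {ψ : AddChar F ℂ} (hψ : ψ ≠ 0)
    [Fintype C] {u : Fin n → F} (hu : u ∉ dualCode C) : ∑ c : C, ψ (u ⬝ᵥ c) = 0 := by
  obtain ⟨c₀, hc₀, huc₀⟩ : ∃ c ∈ C, u ⬝ᵥ c ≠ 0 := by
    simpa [dualCode, dotProduct] using hu
  obtain ⟨a, ha⟩ := AddChar.exists_apply_mul_ne_one hψ huc₀
  let χ : AddChar C ℂ :=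
    ψ.compAddMonoidHom (dotProductBilin F F u ∘ₗ C.subtype).toAddMonoidHom
  exact (AddChar.sum_eq_zero_iff_ne_zero (ψ := χ)).2 <| AddChar.ne_zero_iff.2
    ⟨⟨a • c₀, C.smul_mem a hc₀⟩, by simpa [χ, dotProduct_smul] using ha⟩

variable [Fintype F]

lemma sum_dotFourier_add_eq_card_mul {ψ : AddChar F ℂ} (hψ : ψ ≠ 0) [Fintype C]
    {f : (Fin n → F) → ℂ} (hf : ∀ u ∈ dualCode C, u ≠ 0 → f u = 0) (v : Fin n → F) :
    ∑ c : C, dotFourier ψ f (v + c) = Fintype.card C * f 0 := by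
  calc ∑ c : C, dotFourier ψ f (v + c)
      = ∑ u, f u * ψ (u ⬝ᵥ v) * ∑ c : C, ψ (u ⬝ᵥ c) := by
        simp only [dotFourier, dotProduct_add, AddChar.map_add_eq_mul, mul_sum]
        rw [sum_comm]
        simp only [mul_assoc]
    _ = Fintype.card C * f 0 := by
        rw [Fintype.sum_eq_single 0 fun u hu => ?_]
        · simp [mul_comm]
        by_cases huC : u ∈ dualCode C
        · simp [hf u huC hu]
        · simp [sum_addChar_dotProduct_eq_zero_of_notMem_dualCode hψ huC]

variable [DecidableEq F]

theorem exists_mem_hammingDist_le_card_of_dual_weights (W : Finset ℕ) (hW₀ : 0 ∉ W)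
    (hW : ∀ u ∈ dualCode C, u ≠ 0 → hammingNorm u ∈ W) (v : Fin n → F) :
    ∃ c ∈ C, hammingDist v c ≤ #W := by
  have := Fintype.ofFinite C
  obtain ⟨ψ, hψ₁⟩ := (AddChar.exists_apply_ne_zero (a := (1 : F))).2 one_ne_zero
  have hψ : ψ ≠ 0 := AddChar.ne_zero_iff.2 ⟨1, hψ₁⟩
  set p : ℂ[X] := ∏ w ∈ W, (X - Polynomial.C (w : ℂ))
  set f : (Fin n → F) → ℂ := fun u => p.eval (hammingNorm u : ℂ)
  have hf₀ : f 0 ≠ 0 := by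
    simp only [f, p, eval_prod, hammingNorm_zero]
    exact prod_ne_zero_iff.2 fun w hw => by simpa using ne_of_mem_of_not_mem hw hW₀
  have hf : ∀ u ∈ dualCode C, u ≠ 0 → f u = 0 := fun u hu hu₀ => by
    simpa [f, p, eval_prod] using prod_eq_zero (hW u hu hu₀) (sub_self _)
  obtain ⟨c, hc⟩ : ∃ c : C, dotFourier ψ f (v + c) ≠ 0 := by
    by_contra! h
    have := sum_dotFourier_add_eq_card_mul hψ hf v
    simp [h, hf₀] at this
  refine ⟨-c, neg_mem c.2, ?_⟩
  rw [hammingDist_comm, hammingDist_eq_hammingNorm, neg_neg, add_comm]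
  by_contra! hlt
  exact hc <| dotFourier_eq_zero_of_mem_juntaSpan hψ
    (eval_hammingNorm_mem_juntaSpan (natDegree_finsetProd_X_sub_C_eq_card W _).le) hlt

lemma coveringRadius_le {r : ℕ} (h : ∀ v, ∃ c ∈ C, hammingDist v c ≤ r) :
    coveringRadius C ≤ r := by
  refine csSup_le ⟨_, 0, rfl⟩ ?_
  rintro _ ⟨v, rfl⟩
  obtain ⟨c, hc, hvc⟩ := h v
  exact le_trans (Nat.sInf_le ⟨c, hc, rfl⟩) hvc

end Code

/-- Delsarte's external distance bound: if the dual code of a linear code `C` over `GF(q)`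
has exactly `s'` distinct nonzero weights, then the covering radius of `C` is at most `s'`. -/
theorem stmt_3 (F : Type*) [Field F] [Fintype F] [DecidableEq F] (n : ℕ)
    (C : Submodule F (Fin n → F)) (s' : ℕ)
    (hs : {w : ℕ | w ≠ 0 ∧ ∃ c ∈ dualCode C, hammingNorm c = w}.ncard = s') :
    coveringRadius C ≤ s' := by
  have hfin : {w : ℕ | w ≠ 0 ∧ ∃ c ∈ dualCode C, hammingNorm c = w}.Finite :=
    (Set.finite_Iic n).subset fun _ ⟨_, _, _, hc⟩ =>
      hc ▸ hammingNorm_le_card_fintype.trans_eq (Fintype.card_fin n)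
  refine coveringRadius_le fun v => ?_
  obtain ⟨c, hc, hvc⟩ := exists_mem_hammingDist_le_card_of_dual_weights hfin.toFinset (by simp)
    (fun u hu hu₀ => hfin.mem_toFinset.2 ⟨hammingNorm_ne_zero_iff.2 hu₀, u, hu, rfl⟩) v
  exact ⟨c, hc, hvc.trans_eq (by rw [← hs, Set.ncard_eq_toFinset_card _ hfin])⟩
end

section
/- The number of codewords of weight w in an MDS code [n, k, d] over GF(q), for d ≤ w ≤ n, equals A_w = C(n,w) · (q-1) · Σ_{j=0}^{w-d} (-1)^j C(w-1, j) q^{w-d-j}, where d = n-k+1. -/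
/-! In an MDS code (minimum weight `d`, dimension `n - d + 1`) the codewords supported in a set `S`
of coordinates form a subspace of dimension exactly `#S - (d - 1)`. It is at most that, because
restricting to any `#S - (d - 1)` coordinates of `S` is injective on it (a kernel element has
weight below `d`); it is at least that, being the kernel of the restriction of the code to the
`n - #S` coordinates outside `S`. Inclusion–exclusion over the coordinates of `S` where a codeword
vanishes then counts the codewords of support exactly `S`, `#S = w`, as
`∑ j, (-1)^j C(w,j) q^(w - j - (d - 1))`, and Pascal's rule turns this into
`(q - 1) ∑ j, (-1)^j C(w-1,j) q^(w - d - j)`. -/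

/-- The minimum distance (= minimum nonzero weight) of a linear code. -/
noncomputable def minDist {F : Type*} [Field F] [Fintype F] [DecidableEq F] {n : ℕ}
    (C : Submodule F (Fin n → F)) : ℕ :=
  sInf {w | ∃ c ∈ C, c ≠ 0 ∧ hammingNorm c = w}

open Finset Module

theorem sum_range_neg_one_pow_choose_succ_mul {R : Type*} [CommRing R] (v : ℕ) (g : ℕ → R) :
    ∑ j ∈ range (v + 2), (-1) ^ j * ((v + 1).choose j : R) * g j =
      ∑ j ∈ range (v + 1), (-1) ^ j * (v.choose j : R) * (g j - g (j + 1)) := by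
  have hshift : ∑ j ∈ range (v + 1), (-1) ^ (j + 1) * (v.choose (j + 1) : R) * g (j + 1) + g 0 =
      ∑ j ∈ range (v + 1), (-1) ^ j * (v.choose j : R) * g j := by
    calc _ = ∑ j ∈ range (v + 2), (-1) ^ j * (v.choose j : R) * g j := by
          rw [sum_range_succ' _ (v + 1)]; simp
      _ = _ := by rw [sum_range_succ, Nat.choose_succ_self]; simp
  rw [sum_range_succ']
  simp only [mul_sub, sum_sub_distrib]
  rw [← hshift]
  simp only [pow_succ, mul_neg, mul_one, Nat.choose_succ_succ', Nat.cast_add, mul_add, neg_mul,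
    add_mul, sum_add_distrib, sum_neg_distrib, pow_zero, Nat.choose_zero_right, Nat.cast_one,
    one_mul]
  ring

theorem sum_range_neg_one_pow_choose_mul_pow_sub {R : Type*} [CommRing R] (q : R) {w d : ℕ}
    (hd : 1 ≤ d) (hdw : d ≤ w) :
    ∑ j ∈ range (w + 1), (-1) ^ j * (w.choose j : R) * q ^ (w - j - (d - 1)) =
      (q - 1) * ∑ j ∈ range (w - d + 1), (-1) ^ j * ((w - 1).choose j : R) * q ^ (w - d - j) := by
  obtain ⟨v, rfl⟩ : ∃ v, w = v + 1 := ⟨w - 1, by omega⟩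
  rw [sum_range_neg_one_pow_choose_succ_mul, mul_sum, Nat.add_sub_cancel,
    ← sum_subset (range_subset_range.2 (by omega : v + 1 - d + 1 ≤ v + 1))]
  · refine sum_congr rfl fun j hj => ?_
    rw [mem_range] at hj
    rw [show v + 1 - j - (d - 1) = v + 1 - d - j + 1 by omega,
      show v + 1 - (j + 1) - (d - 1) = v + 1 - d - j by omega]
    ring
  · intro j _ hj
    rw [mem_range] at hj
    rw [show v + 1 - j - (d - 1) = 0 by omega, show v + 1 - (j + 1) - (d - 1) = 0 by omega]
    simp

section Support

variable {ι M : Type*} [Fintype ι] [DecidableEq ι] [Fintype M] [Zero M] [DecidableEq M]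
  (p : (ι → M) → Prop) [DecidablePred p]

theorem card_filter_hammingNorm_eq (w : ℕ) :
    #{c | p c ∧ hammingNorm c = w} =
      ∑ S ∈ powersetCard w univ, #{c | p c ∧ ({i | c i ≠ 0} : Finset ι) = S} := by
  rw [card_eq_sum_card_fiberwise (f := fun c => ({i | c i ≠ 0} : Finset ι))
    (t := powersetCard w univ) fun c hc => by simpa [hammingNorm] using (mem_filter.1 hc).2.2]
  refine sum_congr rfl fun S hS => congrArg card ?_
  ext c
  simp only [mem_filter, mem_univ, true_and]
  constructor
  · tauto
  · rintro ⟨hc, rfl⟩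
    exact ⟨⟨hc, mem_powersetCard_univ.1 hS⟩, rfl⟩

theorem card_filter_support_eq_sum_powerset (S : Finset ι) :
    (#{c | p c ∧ ({i | c i ≠ 0} : Finset ι) = S} : ℤ) =
      ∑ t ∈ S.powerset, (-1 : ℤ) ^ #t * #{c | p c ∧ ∀ i ∉ S \ t, c i = 0} := by
  let Z : ι → Finset (ι → M) := fun i => {c | c i = 0}
  have h := inclusion_exclusion_sum_inf_compl (G := ℤ) S Z
    fun c => if p c ∧ ∀ i ∉ S, c i = 0 then 1 else 0
  simp only [sum_boole, smul_eq_mul] at h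
  have hexact : {c ∈ S.inf fun i => (Z i)ᶜ | p c ∧ ∀ i ∉ S, c i = 0} =
      ({c | p c ∧ ({i | c i ≠ 0} : Finset ι) = S} : Finset (ι → M)) := by
    ext c
    simp only [Z, mem_filter, mem_univ, true_and, mem_inf, mem_compl, Finset.ext_iff]
    grind
  have hvanish : ∀ t ∈ S.powerset, {c ∈ t.inf Z | p c ∧ ∀ i ∉ S, c i = 0} =
      ({c | p c ∧ ∀ i ∉ S \ t, c i = 0} : Finset (ι → M)) := by
    intro t ht
    ext c
    simp only [Z, mem_filter, mem_univ, true_and, mem_inf, mem_sdiff]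
    grind
  rw [← hexact, h]
  exact sum_congr rfl fun t ht => by rw [hvanish t ht]

end Support

section LinearCode

variable {F ι : Type*} [Field F]

variable (F) in
def supportedIn (S : Finset ι) : Submodule F (ι → F) :=
  LinearMap.ker (LinearMap.funLeft F F (Subtype.val : {i // i ∉ S} → ι))

theorem mem_supportedIn {S : Finset ι} {c : ι → F} : c ∈ supportedIn F S ↔ ∀ i ∉ S, c i = 0 := by
  simp [supportedIn, funext_iff, LinearMap.funLeft_apply]

theorem hammingNorm_le_card_of_mem_supportedIn [Fintype ι] [DecidableEq F] {S : Finset ι}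
    {c : ι → F} (hc : c ∈ supportedIn F S) : hammingNorm c ≤ #S :=
  card_le_card fun i hi => by_contra fun hiS => (mem_filter.1 hi).2 (mem_supportedIn.1 hc i hiS)

theorem finrank_inf_supportedIn_le [Fintype ι] [DecidableEq ι] [DecidableEq F]
    {C : Submodule F (ι → F)} {d : ℕ} (hC : ∀ c ∈ C, c ≠ 0 → d ≤ hammingNorm c) (S : Finset ι) :
    finrank F ↥(C ⊓ supportedIn F S) ≤ #S - (d - 1) := by
  obtain ⟨T, hTS, hT⟩ := exists_subset_card_eq (show #S - (d - 1) ≤ #S from Nat.sub_le _ _)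
  let restrict := (LinearMap.funLeft F F (Subtype.val : T → ι)).comp (C ⊓ supportedIn F S).subtype
  have hinj : Function.Injective restrict := by
    rw [← LinearMap.ker_eq_bot, Submodule.eq_bot_iff]
    rintro ⟨c, hcC, hcS⟩ hc
    have hsupp : c ∈ supportedIn F (S \ T) := mem_supportedIn.2 fun i hi => by
      by_cases hiT : i ∈ T
      · exact congrFun hc ⟨i, hiT⟩
      · exact mem_supportedIn.1 hcS i (by simpa [hiT] using hi)
    have hle := hammingNorm_le_card_of_mem_supportedIn hsupp
    rw [card_sdiff_of_subset hTS] at hle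
    by_contra hne
    have hc0 : c ≠ 0 := fun h => hne (Subtype.ext h)
    have := hC c hcC hc0
    have := hammingNorm_pos_iff.2 hc0
    omega
  simpa [hT] using LinearMap.finrank_le_finrank_of_injective hinj

theorem finrank_le_finrank_inf_supportedIn_add [Fintype ι] [DecidableEq ι] (C : Submodule F (ι → F))
    (S : Finset ι) :
    finrank F C ≤ finrank F ↥(C ⊓ supportedIn F S) + (Fintype.card ι - #S) := by
  let restrict := (LinearMap.funLeft F F (Subtype.val : {i // i ∉ S} → ι)).comp C.subtype
  have hker : LinearMap.ker restrict = (supportedIn F S).comap C.subtype := LinearMap.ker_comp _ _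
  have hrange := (LinearMap.range restrict).finrank_le
  rw [← LinearMap.finrank_range_add_finrank_ker restrict, hker, ← Submodule.finrank_map_subtype_eq,
    Submodule.map_comap_subtype]
  simp only [finrank_fintype_fun_eq_card, Fintype.card_subtype_compl, Fintype.card_coe] at hrange
  omega

theorem finrank_inf_supportedIn [Fintype ι] [DecidableEq ι] [DecidableEq F]
    {C : Submodule F (ι → F)} {d : ℕ} (hC : ∀ c ∈ C, c ≠ 0 → d ≤ hammingNorm c)
    (hmds : finrank F C + d = Fintype.card ι + 1) (S : Finset ι) :
    finrank F ↥(C ⊓ supportedIn F S) = #S - (d - 1) := by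
  have := finrank_inf_supportedIn_le hC S
  have := finrank_le_finrank_inf_supportedIn_add C S
  have := card_le_univ S
  omega

theorem card_filter_mem_supportedIn [Fintype ι] [DecidableEq ι] [Fintype F] [DecidableEq F]
    {C : Submodule F (ι → F)} [DecidablePred (· ∈ C)] {d : ℕ}
    (hC : ∀ c ∈ C, c ≠ 0 → d ≤ hammingNorm c) (hmds : finrank F C + d = Fintype.card ι + 1)
    (S : Finset ι) :
    #{c | c ∈ C ∧ ∀ i ∉ S, c i = 0} = Fintype.card F ^ (#S - (d - 1)) := by
  rw [← finrank_inf_supportedIn hC hmds S, ← Nat.card_eq_fintype_card, ← natCard_eq_pow_finrank,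
    ← Fintype.card_subtype, ← Nat.card_eq_fintype_card]
  exact Nat.card_congr (Equiv.subtypeEquivRight fun c => by rw [Submodule.mem_inf, mem_supportedIn])

theorem card_filter_support_eq_of_mds [Fintype ι] [DecidableEq ι] [Fintype F] [DecidableEq F]
    {C : Submodule F (ι → F)} [DecidablePred (· ∈ C)] {d : ℕ}
    (hC : ∀ c ∈ C, c ≠ 0 → d ≤ hammingNorm c) (hmds : finrank F C + d = Fintype.card ι + 1)
    (S : Finset ι) :
    (#{c | c ∈ C ∧ ({i | c i ≠ 0} : Finset ι) = S} : ℤ) =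
      ∑ j ∈ range (#S + 1),
        (-1) ^ j * ((#S).choose j : ℤ) * (Fintype.card F : ℤ) ^ (#S - j - (d - 1)) := by
  rw [card_filter_support_eq_sum_powerset]
  calc _ = ∑ t ∈ S.powerset, (-1 : ℤ) ^ #t * (Fintype.card F : ℤ) ^ (#S - #t - (d - 1)) :=
        sum_congr rfl fun t ht => by
          rw [card_filter_mem_supportedIn hC hmds, card_sdiff_of_subset (mem_powerset.1 ht)]
          push_cast
          rfl
    _ = _ := by
      rw [sum_powerset_apply_card fun m =>
        (-1 : ℤ) ^ m * (Fintype.card F : ℤ) ^ (#S - m - (d - 1))]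
      simp only [nsmul_eq_mul]
      exact sum_congr rfl fun j _ => by ring

end LinearCode

theorem stmt_7_general (q n k d : ℕ) (F : Type*) [Field F] [Fintype F] [DecidableEq F]
    (hcard : Fintype.card F = q)
    (C : Submodule F (Fin n → F)) (hk : Module.finrank F C = k)
    (hd : d = n - k + 1) (hmin : minDist C = d)
    (w : ℕ) (hw1 : d ≤ w) :
    ({c : Fin n → F | c ∈ C ∧ hammingNorm c = w}.ncard : ℤ) =
      (n.choose w : ℤ) * ((q : ℤ) - 1) *
        ∑ j ∈ Finset.range (w - d + 1),
          (-1) ^ j * ((w - 1).choose j : ℤ) * (q : ℤ) ^ (w - d - j) := by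
  classical
  have hweight : ∀ c ∈ C, c ≠ 0 → d ≤ hammingNorm c := fun c hc hc0 =>
    hmin ▸ Nat.sInf_le ⟨c, hc, hc0, rfl⟩
  have hkn : k ≤ n := hk ▸ (Submodule.finrank_le C).trans_eq (by simp)
  have hmds : finrank F C + d = Fintype.card (Fin n) + 1 := by rw [Fintype.card_fin]; omega
  rw [Set.ncard_eq_toFinset_card', Set.toFinset_ofPred, card_filter_hammingNorm_eq, Nat.cast_sum,
    sum_congr rfl fun S hS => by
      rw [card_filter_support_eq_of_mds hweight hmds, mem_powersetCard_univ.1 hS, hcard],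
    sum_const, card_powersetCard, card_univ, Fintype.card_fin, nsmul_eq_mul,
    sum_range_neg_one_pow_choose_mul_pow_sub _ (by omega) hw1]
  ring

/-- The number of codewords of weight `w` in an MDS code `[n,k,d]` over `GF(q)`,
for `d ≤ w ≤ n` with `d = n-k+1`, equals
`A_w = C(n,w)·(q-1)·∑_{j=0}^{w-d} (-1)^j C(w-1,j) q^(w-d-j)`. -/
theorem stmt_7 (q n k d : ℕ) (F : Type*) [Field F] [Fintype F] [DecidableEq F]
    (hcard : Fintype.card F = q)
    (C : Submodule F (Fin n → F)) (hk : Module.finrank F C = k)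
    (hd : d = n - k + 1) (hmin : minDist C = d)
    (w : ℕ) (hw1 : d ≤ w) (hw2 : w ≤ n) :
    ({c : Fin n → F | c ∈ C ∧ hammingNorm c = w}.ncard : ℤ) =
      (n.choose w : ℤ) * ((q : ℤ) - 1) *
        ∑ j ∈ Finset.range (w - d + 1),
          (-1) ^ j * ((w - 1).choose j : ℤ) * (q : ℤ) ^ (w - d - j) :=
  stmt_7_general q n k d F hcard C hk hd hmin w hw1
end

section
/- Any MDS code over GF(q) with parameters [q+1, k, q-k+2] and k ≥ 3 contains codewords of every weight w with q-k+2 ≤ w ≤ q+1. -/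
/-- Any MDS code over `GF(q)` with parameters `[q+1, k, q-k+2]` and `k ≥ 3` contains
codewords of every weight `w` with `q-k+2 ≤ w ≤ q+1`. -/
theorem stmt_13 (q k : ℕ) (F : Type*) [Field F] [Fintype F] [DecidableEq F]
    (hcard : Fintype.card F = q) (hk3 : 3 ≤ k)
    (C : Submodule F (Fin (q + 1) → F)) (hk : Module.finrank F C = k)
    (hd : minDist C = q - k + 2) :
    ∀ w : ℕ, q - k + 2 ≤ w → w ≤ q + 1 → ∃ c ∈ C, hammingNorm c = w := by
  intro w hw1 hw2
  have hq2 : 2 ≤ q := by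
    have := Fintype.one_lt_card (α := F); omega
  have hkn : k ≤ q + 1 := by
    have h1 := Submodule.finrank_le C
    rw [hk, Module.finrank_pi] at h1
    simpa using h1
  have hmin : ∀ c : Fin (q+1) → F, c ∈ C → c ≠ 0 → q - k + 2 ≤ hammingNorm c := by
    intro c hc hne
    have hmem : hammingNorm c ∈ {w | ∃ c ∈ C, c ≠ 0 ∧ hammingNorm c = w} := ⟨c, hc, hne, rfl⟩
    have := Nat.sInf_le hmem
    rw [minDist] at hd
    omega
  -- prescribing values on any ≤ k coordinates
  have hA : ∀ Z : Finset (Fin (q+1)), Z.card ≤ k → ∀ v : Fin (q+1) → F,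
      ∃ b, b ∈ C ∧ ∀ j ∈ Z, b j = v j := by
    intro Z hZ v
    obtain ⟨Z', hZZ', hZ'⟩ := Finset.exists_superset_card_eq hZ (by simpa using hkn)
    let φ : C →ₗ[F] (Z' → F) :=
      LinearMap.pi fun j => (LinearMap.proj (j : Fin (q+1))).comp C.subtype
    have hinj : Function.Injective φ := by
      rw [← LinearMap.ker_eq_bot, LinearMap.ker_eq_bot']
      intro m hm
      by_contra hm0
      have hmne : (m : Fin (q+1) → F) ≠ 0 :=
        fun h => hm0 (Submodule.coe_eq_zero.mp h)
      have hns : q - k + 2 ≤ hammingNorm (m : Fin (q+1) → F) := hmin _ m.2 hmne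
      have hsub : (Finset.univ.filter fun i => (m : Fin (q+1) → F) i ≠ 0) ⊆ Z'ᶜ := by
        intro i hi
        rw [Finset.mem_filter] at hi
        rw [Finset.mem_compl]
        intro hiZ'
        exact hi.2 (by simpa [φ] using congrFun hm (⟨i, hiZ'⟩ : Z'))
      have hle : hammingNorm (m : Fin (q+1) → F) ≤ (q+1) - k := by
        have h2 := Finset.card_le_card hsub
        rw [Finset.card_compl, hZ', Fintype.card_fin] at h2
        exact h2
      omega
    have hsurj : Function.Surjective φ :=
      (LinearMap.injective_iff_surjective_of_finrank_eq_finrank (by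
        rw [hk, Module.finrank_pi, Fintype.card_coe, hZ'])).mp hinj
    obtain ⟨b, hb⟩ := hsurj (fun j => v j)
    refine ⟨b, b.2, fun j hj => ?_⟩
    simpa [φ] using congrFun hb (⟨j, hZZ' hj⟩ : Z')
  obtain ⟨S, -, hS⟩ := Finset.exists_subset_card_eq
    (s := (Finset.univ : Finset (Fin (q+1)))) (n := w) (by simpa using hw2)
  have main : ∀ T : Finset (Fin (q+1)), T ⊆ S →
      ∃ c, c ∈ C ∧ (∀ j, j ∉ S → c j = 0) ∧ ∀ t ∈ T, c t ≠ 0 := by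
    intro T
    induction T using Finset.induction_on with
    | empty => exact fun _ => ⟨0, C.zero_mem, fun _ _ => rfl, by simp⟩
    | @insert i T hiT ih =>
      intro hsub
      have hiS : i ∈ S := hsub (Finset.mem_insert_self i T)
      have hTS : T ⊆ S := (Finset.subset_insert i T).trans hsub
      obtain ⟨c, hc, hcz, hcnz⟩ := ih hTS
      by_cases hci : c i ≠ 0
      · exact ⟨c, hc, hcz, fun t ht =>
          (Finset.mem_insert.mp ht).elim (fun h => h ▸ hci) (hcnz t)⟩
      push_neg at hci
      have hTw : T.card ≤ w - 1 := by
        have h2 := Finset.card_le_card hsub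
        rw [Finset.card_insert_of_notMem hiT, hS] at h2
        omega
      set r : ℕ := min T.card (k - 1 - (q + 1 - w)) with hr
      obtain ⟨R, hRT, hRcard⟩ := Finset.exists_subset_card_eq
        (s := T) (n := r) (min_le_left _ _)
      set Z : Finset (Fin (q+1)) := insert i (Sᶜ ∪ R) with hZdef
      have hZcard : Z.card ≤ k := by
        have h1 : Z.card ≤ 1 + (Sᶜ.card + R.card) :=
          le_trans (Finset.card_insert_le _ _)
            (by have := Finset.card_union_le Sᶜ R; omega)
        rw [Finset.card_compl, hS, Fintype.card_fin, hRcard] at h1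
        omega
      obtain ⟨b, hb, hbZ⟩ := hA Z hZcard (fun j => if j = i then 1 else 0)
      have hbi : b i = 1 := by
        have := hbZ i (Finset.mem_insert_self _ _); simpa using this
      have hbS : ∀ j, j ∉ S → b j = 0 := by
        intro j hj
        have hji : j ≠ i := fun h => hj (h ▸ hiS)
        have := hbZ j (Finset.mem_insert_of_mem
          (Finset.mem_union_left _ (Finset.mem_compl.mpr hj)))
        simpa [hji] using this
      have hbR : ∀ t ∈ R, b t = 0 := by
        intro t ht
        have hti : t ≠ i := fun h => hiT (h ▸ hRT ht)
        have := hbZ t (Finset.mem_insert_of_mem (Finset.mem_union_right _ ht))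
        simpa [hti] using this
      set Bad : Finset F := insert 0 ((T \ R).image fun t => -c t / b t) with hBad
      have hBadcard : Bad.card < q := by
        have h1 : Bad.card ≤ 1 + (T \ R).card :=
          le_trans (Finset.card_insert_le _ _)
            (by have := Finset.card_image_le (s := T \ R) (f := fun t => -c t / b t); omega)
        rw [Finset.card_sdiff_of_subset hRT, hRcard] at h1
        omega
      obtain ⟨lam, hlam⟩ : ∃ lam : F, lam ∉ Bad := by
        by_contra h
        push_neg at h
        have h2 : (Finset.univ : Finset F) ⊆ Bad := fun x _ => h x
        have h3 := Finset.card_le_card h2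
        rw [Finset.card_univ, hcard] at h3
        omega
      have hlam0 : lam ≠ 0 := fun h => hlam (h ▸ Finset.mem_insert_self _ _)
      refine ⟨c + lam • b, C.add_mem hc (C.smul_mem _ hb), ?_, ?_⟩
      · intro j hj; simp [hcz j hj, hbS j hj]
      · intro t ht
        rcases Finset.mem_insert.mp ht with rfl | htT
        · simp [hci, hbi, hlam0]
        · by_cases hbt : b t = 0
          · simpa [hbt] using hcnz t htT
          · intro heq
            apply hlam
            refine Finset.mem_insert_of_mem (Finset.mem_image.mpr ⟨t, ?_, ?_⟩)
            · exact Finset.mem_sdiff.mpr ⟨htT, fun hR => hbt (hbR t hR)⟩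
            · have h2 : c t + lam * b t = 0 := by simpa using heq
              rw [div_eq_iff hbt]
              linear_combination -h2
  obtain ⟨c, hc, hcz, hcnz⟩ := main S Finset.Subset.rfl
  refine ⟨c, hc, ?_⟩
  have hfilt : (Finset.univ.filter fun i => c i ≠ 0) = S := by
    ext i
    simp only [Finset.mem_filter, Finset.mem_univ, true_and]
    constructor
    · intro h; by_contra hS'; exact h (hcz i hS')
    · exact hcnz i
  have : hammingNorm c = (Finset.univ.filter fun i => c i ≠ 0).card := rfl
  rw [this, hfilt, hS]
end

section
/- For m > 2 and q = 2^m, the MDS code over GF(q) with parameters [q+2, q-1, 4] whose parity check matrix is H (rows (1,...,1,1,0,0), (1,α,...,α^{q-2},0,1,0), (1,α²,...,α^{2(q-2)},0,0,1)) contains the codeword v = (α, 1, ..., 1, α, α+1, α+1) of full weight q+2; hence it contains codewords of every weight w with 4 ≤ w ≤ q+2. -/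
open Finset

/-- Row `j` (for `j = 0, 1, 2`) of the parity check matrix `H` of the `[q+2, q-1, 4]` MDS
code over `GF(q)`, `q = 2^m`: the first `q-1` columns are `(1, αⁱ, α²ⁱ)` for
`i = 0, …, q-2`, followed by the three unit columns. -/
def hRow {F : Type*} [Field F] (q : ℕ) (α : F) (j : ℕ) : Fin (q + 2) → F :=
  fun i => if (i : ℕ) < q - 1 then α ^ (j * (i : ℕ)) else if (i : ℕ) = q - 1 + j then 1 else 0

/-- The vector `v = (α, 1, …, 1, α, α+1, α+1)` (with `q - 2` ones). -/
def vFull {F : Type*} [Field F] (q : ℕ) (α : F) : Fin (q + 2) → F :=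
  fun i => if (i : ℕ) = 0 then α
    else if (i : ℕ) < q - 1 then 1
    else if (i : ℕ) = q - 1 then α
    else α + 1

/- ===================== auxiliary material ===================== -/

/-- The universal codeword family: `x` at position `0`, ones at positions `1 … s-1`,
zeros up to `q-2`, then the three parity completions. -/
def cwN {F : Type*} [Field F] (q s : ℕ) (α x : F) : ℕ → F :=
  fun n => if n = 0 then x
    else if n < s then 1
    else if n < q - 1 then 0
    else if n = q - 1 then x + ∑ k ∈ Finset.Ico 1 s, α ^ (0 * k)
    else if n = q then x + ∑ k ∈ Finset.Ico 1 s, α ^ (1 * k)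
    else x + ∑ k ∈ Finset.Ico 1 s, α ^ (2 * k)

lemma mem_dual_span {F : Type*} [Field F] {n : ℕ} (u r0 r1 r2 : Fin n → F)
    (h0 : ∑ i, u i * r0 i = 0) (h1 : ∑ i, u i * r1 i = 0) (h2 : ∑ i, u i * r2 i = 0) :
    u ∈ dualCode (Submodule.span F {r0, r1, r2}) := by
  intro c hc
  induction hc using Submodule.span_induction with
  | mem x hx =>
      simp only [Set.mem_insert_iff, Set.mem_singleton_iff] at hx
      rcases hx with rfl | rfl | rfl <;> assumption
  | zero => simp
  | add x y hx hy ihx ihy =>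
      simp only [Pi.add_apply, mul_add, Finset.sum_add_distrib, ihx, ihy, add_zero]
  | smul a x hx ih =>
      simp only [Pi.smul_apply, smul_eq_mul, mul_left_comm, ← Finset.mul_sum, ih, mul_zero]

lemma dot_hRow {F : Type*} [Field F] (q : ℕ) (hq : 8 ≤ q) (α : F) (j : ℕ) (u : ℕ → F) :
    ∑ i : Fin (q + 2), u (i : ℕ) * hRow q α j i
      = (∑ n ∈ Finset.range (q - 1), u n * α ^ (j * n))
        + ((u (q - 1) * if q - 1 = q - 1 + j then 1 else 0)
          + (u q * if q = q - 1 + j then 1 else 0)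
          + (u (q + 1) * if q + 1 = q - 1 + j then 1 else 0)) := by
  have key : ∑ i : Fin (q + 2), u (i : ℕ) * hRow q α j i
      = ∑ n ∈ Finset.range (q + 2),
          u n * (if n < q - 1 then α ^ (j * n) else if n = q - 1 + j then 1 else 0) :=
    Fin.sum_univ_eq_sum_range
      (fun n => u n * (if n < q - 1 then α ^ (j * n) else if n = q - 1 + j then 1 else 0)) (q + 2)
  rw [key, show q + 2 = (q - 1) + 1 + 1 + 1 by omega, Finset.sum_range_succ,
    Finset.sum_range_succ, Finset.sum_range_succ]
  have e1 : q - 1 + 1 = q := by omega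
  have e2 : q - 1 + 1 + 1 = q + 1 := by omega
  rw [e1, e2]
  have hhead : ∑ n ∈ Finset.range (q - 1),
      u n * (if n < q - 1 then α ^ (j * n) else if n = q - 1 + j then 1 else 0)
      = ∑ n ∈ Finset.range (q - 1), u n * α ^ (j * n) := by
    refine Finset.sum_congr rfl fun n hn => ?_
    rw [Finset.mem_range] at hn
    rw [if_pos hn]
  rw [hhead, if_neg (by omega : ¬ q - 1 < q - 1), if_neg (by omega : ¬ q < q - 1),
    if_neg (by omega : ¬ q + 1 < q - 1)]
  ring

lemma norm_aux {F : Type*} [Field F] [DecidableEq F] (q : ℕ) (u : ℕ → F) :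
    hammingNorm (fun i : Fin (q + 2) => u (i : ℕ))
      = ∑ n ∈ Finset.range (q + 2), if u n ≠ 0 then 1 else 0 := by
  rw [hammingNorm, Finset.card_filter]
  exact Fin.sum_univ_eq_sum_range (fun n => if u n ≠ 0 then 1 else 0) (q + 2)

section Main

variable {F : Type*} [Field F]

lemma cwN_head {q s : ℕ} (hq : 8 ≤ q) (hs1 : 1 ≤ s) (hs2 : s ≤ q - 1) (α x : F) (j : ℕ) :
    ∑ n ∈ Finset.range (q - 1), cwN q s α x n * α ^ (j * n)
      = x + ∑ k ∈ Finset.Ico 1 s, α ^ (j * k) := by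
  rw [Finset.range_eq_Ico, Finset.sum_eq_sum_Ico_succ_bot (by omega) ]
  have h0 : cwN q s α x 0 = x := by simp [cwN]
  rw [h0, mul_zero, pow_zero, mul_one,
    ← Finset.sum_Ico_consecutive _ hs1 hs2]
  have hmid : ∑ n ∈ Finset.Ico 1 s, cwN q s α x n * α ^ (j * n)
      = ∑ n ∈ Finset.Ico 1 s, α ^ (j * n) := by
    refine Finset.sum_congr rfl fun n hn => ?_
    rw [Finset.mem_Ico] at hn
    have h1 : cwN q s α x n = 1 := by
      simp only [cwN]
      rw [if_neg (by omega), if_pos (by omega)]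
    rw [h1, one_mul]
  have htail : ∑ n ∈ Finset.Ico s (q - 1), cwN q s α x n * α ^ (j * n) = 0 := by
    refine Finset.sum_eq_zero fun n hn => ?_
    rw [Finset.mem_Ico] at hn
    have h1 : cwN q s α x n = 0 := by
      simp only [cwN]
      rw [if_neg (by omega), if_neg (by omega), if_pos (by omega)]
    rw [h1, zero_mul]
  rw [hmid, htail, add_zero]

lemma cwN_q1 {q s : ℕ} (hq : 8 ≤ q) (hs2 : s ≤ q - 1) (α x : F) :
    cwN q s α x (q - 1) = x + ∑ k ∈ Finset.Ico 1 s, α ^ (0 * k) := by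
  simp only [cwN]
  rw [if_neg (by omega), if_neg (by omega), if_neg (by omega)]
  simp

lemma cwN_q2 {q s : ℕ} (hq : 8 ≤ q) (hs2 : s ≤ q - 1) (α x : F) :
    cwN q s α x q = x + ∑ k ∈ Finset.Ico 1 s, α ^ (1 * k) := by
  simp only [cwN]
  rw [if_neg (by omega), if_neg (by omega), if_neg (by omega), if_neg (by omega)]
  simp

lemma cwN_q3 {q s : ℕ} (hq : 8 ≤ q) (hs2 : s ≤ q - 1) (α x : F) :
    cwN q s α x (q + 1) = x + ∑ k ∈ Finset.Ico 1 s, α ^ (2 * k) := by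
  simp only [cwN]
  rw [if_neg (by omega), if_neg (by omega), if_neg (by omega), if_neg (by omega),
    if_neg (by omega)]

lemma cw_mem {q s : ℕ} (hq : 8 ≤ q) (hs1 : 1 ≤ s) (hs2 : s ≤ q - 1) (α x : F)
    (hchar : ∀ a : F, a + a = 0) :
    (fun i : Fin (q + 2) => cwN q s α x (i : ℕ))
      ∈ dualCode (Submodule.span F {hRow q α 0, hRow q α 1, hRow q α 2}) := by
  apply mem_dual_span
  · rw [dot_hRow q hq α 0 _, cwN_head hq hs1 hs2, cwN_q1 hq hs2,
      if_pos (by omega : q - 1 = q - 1 + 0), if_neg (by omega : ¬ q = q - 1 + 0),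
      if_neg (by omega : ¬ q + 1 = q - 1 + 0)]
    rw [mul_one, mul_zero, mul_zero, add_zero, add_zero]
    exact hchar _
  · rw [dot_hRow q hq α 1 _, cwN_head hq hs1 hs2, cwN_q2 hq hs2,
      if_neg (by omega : ¬ q - 1 = q - 1 + 1), if_pos (by omega : q = q - 1 + 1),
      if_neg (by omega : ¬ q + 1 = q - 1 + 1)]
    rw [mul_one, mul_zero, mul_zero, add_zero, zero_add]
    exact hchar _
  · rw [dot_hRow q hq α 2 _, cwN_head hq hs1 hs2, cwN_q3 hq hs2,
      if_neg (by omega : ¬ q - 1 = q - 1 + 2), if_neg (by omega : ¬ q = q - 1 + 2),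
      if_pos (by omega : q + 1 = q - 1 + 2)]
    rw [mul_one, mul_zero, mul_zero, zero_add, zero_add]
    exact hchar _

lemma cw_norm [DecidableEq F] {q s : ℕ} (hq : 8 ≤ q) (hs1 : 1 ≤ s) (hs2 : s ≤ q - 1)
    (α x : F) (hx : x ≠ 0)
    (h0 : x + ∑ k ∈ Finset.Ico 1 s, α ^ (0 * k) ≠ 0)
    (h1 : x + ∑ k ∈ Finset.Ico 1 s, α ^ (1 * k) ≠ 0)
    (h2 : x + ∑ k ∈ Finset.Ico 1 s, α ^ (2 * k) ≠ 0) :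
    hammingNorm (fun i : Fin (q + 2) => cwN q s α x (i : ℕ)) = s + 3 := by
  rw [norm_aux, show q + 2 = (q - 1) + 1 + 1 + 1 by omega, Finset.sum_range_succ,
    Finset.sum_range_succ, Finset.sum_range_succ,
    show q - 1 + 1 = q by omega, show q - 1 + 1 + 1 = q + 1 by omega,
    cwN_q1 hq hs2, cwN_q2 hq hs2, cwN_q3 hq hs2, if_pos h0, if_pos h1, if_pos h2]
  have hhead : ∑ n ∈ Finset.range (q - 1), (if cwN q s α x n ≠ 0 then 1 else 0)
      = ∑ n ∈ Finset.range (q - 1), (if n < s then 1 else 0) := by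
    refine Finset.sum_congr rfl fun n hn => ?_
    rw [Finset.mem_range] at hn
    by_cases hn0 : n = 0
    · subst hn0
      rw [if_pos (by omega : 0 < s), if_pos (by simpa [cwN] using hx)]
    · by_cases hns : n < s
      · rw [if_pos hns, if_pos (by simp [cwN, hn0, hns])]
      · rw [if_neg hns, if_neg (by simp [cwN, hn0, hns]; omega)]
  rw [hhead]
  have : ∑ n ∈ Finset.range (q - 1), (if n < s then 1 else 0) = s := by
    rw [Finset.range_eq_Ico, ← Finset.sum_Ico_consecutive _ (Nat.zero_le s) hs2]
    rw [Finset.sum_congr rfl (fun n hn => if_pos (Finset.mem_Ico.mp hn).2),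
      Finset.sum_congr (rfl : Finset.Ico s (q-1) = _)
        (fun n hn => if_neg (by have := (Finset.mem_Ico.mp hn).1; omega))]
    simp
  rw [this]

lemma vFull_eq_cw {q : ℕ} (hq : 8 ≤ q) (α : F)
    (hS0 : ∑ k ∈ Finset.Ico 1 (q - 1), α ^ (0 * k) = 0)
    (hS1 : ∑ k ∈ Finset.Ico 1 (q - 1), α ^ (1 * k) = 1)
    (hS2 : ∑ k ∈ Finset.Ico 1 (q - 1), α ^ (2 * k) = 1) :
    vFull q α = fun i : Fin (q + 2) => cwN q (q - 1) α α (i : ℕ) := by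
  funext i
  obtain ⟨n, hn⟩ := i
  by_cases h0 : n = 0
  · simp [vFull, cwN, h0]
  · by_cases hlt : n < q - 1
    · simp [vFull, cwN, h0, hlt]
    · by_cases he : n = q - 1
      · simp only [vFull, cwN, if_neg h0, if_neg hlt, if_pos he]
        rw [hS0, add_zero]
      · by_cases he2 : n = q
        · simp only [vFull, cwN, if_neg h0, if_neg hlt, if_neg he, if_pos he2]
          rw [hS1]
        · simp only [vFull, cwN, if_neg h0, if_neg hlt, if_neg he, if_neg he2]
          rw [hS2]

lemma exists_good_x {F : Type*} [Field F] [Fintype F] [DecidableEq F]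
    (hq : 8 ≤ Fintype.card F) (a b c : F) :
    ∃ x : F, x ≠ 0 ∧ x ≠ a ∧ x ≠ b ∧ x ≠ c := by
  by_contra h
  push_neg at h
  have hsub : (Finset.univ : Finset F) ⊆ {0, a, b, c} := by
    intro x _
    simp only [Finset.mem_insert, Finset.mem_singleton]
    by_cases h1 : x = 0; · tauto
    by_cases h2 : x = a; · tauto
    by_cases h3 : x = b; · tauto
    exact Or.inr (Or.inr (Or.inr (h x h1 h2 h3)))
  have hcard := Finset.card_le_card hsub
  rw [Finset.card_univ] at hcard
  have : ({0, a, b, c} : Finset F).card ≤ 4 := by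
    apply le_trans (Finset.card_insert_le _ _)
    have := Finset.card_insert_le a ({b, c} : Finset F)
    have := Finset.card_insert_le b ({c} : Finset F)
    simp_all
    omega
  omega

end Main

/-- For `m > 2` and `q = 2^m`, the MDS code over `GF(q)` with parameters `[q+2, q-1, 4]`
whose parity check matrix is `H` (rows `(1,…,1,1,0,0)`, `(1,α,…,α^(q-2),0,1,0)`,
`(1,α²,…,α^(2(q-2)),0,0,1)`, `α` a primitive element) contains the codeword
`v = (α, 1, …, 1, α, α+1, α+1)` of full weight `q+2`; hence it contains codewords of
every weight `w` with `4 ≤ w ≤ q+2`. -/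
theorem stmt_16 (m : ℕ) (hm : 2 < m) (q : ℕ) (hq : q = 2 ^ m)
    (F : Type*) [Field F] [Fintype F] [DecidableEq F]
    (hcard : Fintype.card F = q) (α : F)
    (hα : ∀ x : F, x ≠ 0 → ∃ k : ℕ, α ^ k = x)
    (C : Submodule F (Fin (q + 2) → F))
    (hC : C = dualCode (Submodule.span F {hRow q α 0, hRow q α 1, hRow q α 2})) :
    vFull q α ∈ C ∧ hammingNorm (vFull q α) = q + 2 ∧
    ∀ w : ℕ, 4 ≤ w → w ≤ q + 2 → ∃ c ∈ C, hammingNorm c = w := by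
  subst hC
  have hq8 : 8 ≤ q := by
    have : 2 ^ 3 ≤ 2 ^ m := Nat.pow_le_pow_right (by norm_num) hm
    omega
  -- characteristic 2
  have hqcast : ((q : ℕ) : F) = 0 := by
    rw [← hcard]; exact FiniteField.cast_card_eq_zero F
  have h2 : (2 : F) = 0 := by
    have : ((2 : F)) ^ m = 0 := by
      have := hqcast
      rw [hq] at this
      push_cast at this
      exact this
    exact pow_eq_zero_iff (by omega) |>.mp this
  have hchar : ∀ a : F, a + a = 0 := fun a => by
    rw [← two_mul, h2, zero_mul]
  -- a nonzero, non-one element exists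
  obtain ⟨x0, hx00, hx01, -, -⟩ := exists_good_x (F := F) (by omega) 1 1 1
  -- facts about α
  have hαne0 : α ≠ 0 := by
    rintro rfl
    obtain ⟨k, hk⟩ := hα x0 hx00
    rcases Nat.eq_zero_or_pos k with rfl | hk0
    · rw [pow_zero] at hk; exact hx01 hk.symm
    · rw [zero_pow (by omega)] at hk; exact hx00 hk.symm
  have hαne1 : α ≠ 1 := by
    rintro rfl
    obtain ⟨k, hk⟩ := hα x0 hx00
    rw [one_pow] at hk
    exact hx01 hk.symm
  have hord : α ^ (q - 1) = 1 := by
    rw [← hcard]; exact FiniteField.pow_card_sub_one_eq_one α hαne0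
  have hα2ne1 : α ^ 2 ≠ 1 := by
    intro h
    apply hαne1
    have hsq : (α + 1) ^ 2 = 0 := by
      linear_combination h + (α + 1) * h2
    have hz : α + 1 = 0 := pow_eq_zero_iff (n := 2) (by omega) |>.mp hsq
    linear_combination hz - hchar 1
  -- full-range geometric sums vanish for j = 1, 2
  have hgeom : ∀ β : F, β ≠ 1 → β ^ (q - 1) = 1 → ∑ n ∈ Finset.range (q - 1), β ^ n = 0 := by
    intro β hβ hβq
    rw [geom_sum_eq hβ, hβq, sub_self, zero_div]
  have hT1 : ∑ n ∈ Finset.range (q - 1), α ^ (1 * n) = 0 := by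
    simpa using hgeom α hαne1 hord
  have hT2 : ∑ n ∈ Finset.range (q - 1), α ^ (2 * n) = 0 := by
    have := hgeom (α ^ 2) hα2ne1 (by rw [← pow_mul, mul_comm, pow_mul, hord, one_pow])
    simpa [pow_mul] using this
  -- Ico sums for s = q - 1
  have hsplit : ∀ j : ℕ, ∑ n ∈ Finset.range (q - 1), α ^ (j * n)
      = 1 + ∑ k ∈ Finset.Ico 1 (q - 1), α ^ (j * k) := by
    intro j
    rw [Finset.range_eq_Ico, Finset.sum_eq_sum_Ico_succ_bot (by omega)]
    simp
  have hS0 : ∑ k ∈ Finset.Ico 1 (q - 1), α ^ (0 * k) = 0 := by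
    have : ∑ k ∈ Finset.Ico 1 (q - 1), α ^ (0 * k)
        = ∑ k ∈ Finset.Ico 1 (q - 1), (1 : F) := by
      refine Finset.sum_congr rfl fun k _ => by simp
    rw [this, Finset.sum_const, Nat.card_Ico, nsmul_eq_mul, mul_one]
    have he : q - 1 - 1 = 2 * (2 ^ (m - 1) - 1) := by
      rw [hq]
      have : 2 ^ m = 2 * 2 ^ (m - 1) := by
        rw [← pow_succ']
        congr 1
        omega
      omega
    rw [he]
    push_cast
    rw [h2, zero_mul]
  have hS1 : ∑ k ∈ Finset.Ico 1 (q - 1), α ^ (1 * k) = 1 := by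
    have h := hsplit 1
    rw [hT1] at h
    linear_combination -h + hchar (∑ k ∈ Finset.Ico 1 (q - 1), α ^ (1 * k))
      + (-1 - ∑ k ∈ Finset.Ico 1 (q - 1), α ^ (1 * k)) * h2
  have hS2 : ∑ k ∈ Finset.Ico 1 (q - 1), α ^ (2 * k) = 1 := by
    have h := hsplit 2
    rw [hT2] at h
    linear_combination -h + hchar (∑ k ∈ Finset.Ico 1 (q - 1), α ^ (2 * k))
      + (-1 - ∑ k ∈ Finset.Ico 1 (q - 1), α ^ (2 * k)) * h2
  have hα1ne0 : α + 1 ≠ 0 := by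
    intro h
    apply hαne1
    have h11 : (1 : F) + 1 = 0 := hchar 1
    linear_combination h - h11
  have hveq := vFull_eq_cw hq8 α hS0 hS1 hS2
  refine ⟨?_, ?_, ?_⟩
  · rw [hveq]
    exact cw_mem hq8 (by omega) le_rfl α α hchar
  · rw [hveq, cw_norm hq8 (by omega) le_rfl α α hαne0
      (by rw [hS0, add_zero]; exact hαne0) (by rw [hS1]; exact hα1ne0)
      (by rw [hS2]; exact hα1ne0)]
    omega
  · intro w hw4 hw2
    set s := w - 3 with hs
    have hs1 : 1 ≤ s := by omega
    have hs2 : s ≤ q - 1 := by omega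
    obtain ⟨x, hx0, hxa, hxb, hxc⟩ := exists_good_x (F := F) (by omega)
      (∑ k ∈ Finset.Ico 1 s, α ^ (0 * k)) (∑ k ∈ Finset.Ico 1 s, α ^ (1 * k))
      (∑ k ∈ Finset.Ico 1 s, α ^ (2 * k))
    have hne : ∀ a : F, x ≠ a → x + a ≠ 0 := by
      intro a hxa h
      apply hxa
      have := hchar a
      linear_combination h - this
    refine ⟨fun i : Fin (q + 2) => cwN q s α x (i : ℕ),
      cw_mem hq8 hs1 hs2 α x hchar, ?_⟩
    rw [cw_norm hq8 hs1 hs2 α x hx0 (hne _ hxa) (hne _ hxb) (hne _ hxc)]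
    omega
end

section
/- Define a_j = C(w-1, j) q^{w-d-j} for 0 ≤ j ≤ w-d. If w ≤ q then a_j > a_{j+1} for all 0 ≤ j < w-d, i.e., the sequence (a_j) is strictly decreasing; consequently the alternating sum Σ_{j=0}^{w-d} (-1)^j a_j is positive. -/
open Finset

/-- Peeling off the first term turns the alternating sum of `f` into `f 0` minus the
alternating sum of the shifted sequence, so both bounds are carried through the induction. -/
theorem alternating_sum_range_mem_Ioc {R : Type*} [Ring R] [LinearOrder R] [IsStrictOrderedRing R]
    (m : ℕ) {f : ℕ → R} (hf : ∀ j < m, f (j + 1) < f j) (hm : 0 < f m) :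
    ∑ j ∈ range (m + 1), (-1) ^ j * f j ∈ Set.Ioc 0 (f 0) := by
  induction m generalizing f with
  | zero => simpa using hm
  | succ m ih =>
    obtain ⟨hpos, hle⟩ : ∑ j ∈ range (m + 1), (-1) ^ j * f (j + 1) ∈ Set.Ioc 0 (f 1) :=
      ih (fun j hj => hf (j + 1) (by omega)) hm
    have hpeel : ∑ j ∈ range (m + 1 + 1), (-1) ^ j * f j
        = f 0 - ∑ j ∈ range (m + 1), (-1) ^ j * f (j + 1) := by
      simp only [sum_range_succ' _ (m + 1), pow_succ, mul_neg_one, neg_mul, sum_neg_distrib,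
        pow_zero, one_mul]
      abel
    rw [hpeel]
    exact ⟨sub_pos.2 (hle.trans_lt (hf 0 (by omega))), sub_le_self _ hpos.le⟩

theorem choose_succ_lt_choose_mul {n j q : ℕ} (hj : j ≤ n) (hnq : n < q) :
    n.choose (j + 1) < n.choose j * q := by
  have hsucc : n.choose (j + 1) * (j + 1) = n.choose j * (n - j) := Nat.choose_succ_right_eq n j
  have hlt : n - j < q * (j + 1) := by nlinarith [Nat.sub_le n j]
  refine Nat.lt_of_mul_lt_mul_right (a := j + 1) ?_
  rw [hsucc, mul_assoc]
  exact Nat.mul_lt_mul_of_pos_left hlt (Nat.choose_pos hj)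

theorem choose_mul_pow_sub_succ_lt {n j m q : ℕ} (hj : j ≤ n) (hnq : n < q) (hjm : j < m) :
    n.choose (j + 1) * q ^ (m - (j + 1)) < n.choose j * q ^ (m - j) := by
  rw [show m - j = m - (j + 1) + 1 by omega, pow_succ', ← mul_assoc]
  exact Nat.mul_lt_mul_of_pos_right (choose_succ_lt_choose_mul hj hnq) (pow_pos (by omega) _)

theorem stmt_19_general (q d w : ℕ) (hd : 1 ≤ d) (hwq : w ≤ q) :
    (∀ j : ℕ, j < w - d →
      (w - 1).choose (j + 1) * q ^ (w - d - (j + 1)) < (w - 1).choose j * q ^ (w - d - j)) ∧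
    0 < ∑ j ∈ Finset.range (w - d + 1),
        (-1) ^ j * ((w - 1).choose j : ℤ) * (q : ℤ) ^ (w - d - j) := by
  have hdec : ∀ j : ℕ, j < w - d →
      (w - 1).choose (j + 1) * q ^ (w - d - (j + 1)) < (w - 1).choose j * q ^ (w - d - j) :=
    fun j hj => choose_mul_pow_sub_succ_lt (by omega) (by omega) hj
  refine ⟨hdec, ?_⟩
  have hlast : (0 : ℤ) < (w - 1).choose (w - d) * (q : ℤ) ^ (w - d - (w - d)) := by
    rw [Nat.sub_self, pow_zero, mul_one]
    exact_mod_cast Nat.choose_pos (by omega)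
  simpa only [mul_assoc] using (alternating_sum_range_mem_Ioc (w - d)
    (f := fun j => ((w - 1).choose j : ℤ) * (q : ℤ) ^ (w - d - j))
    (fun j hj => by exact_mod_cast hdec j hj) hlast).1

/-- Let `a_j = C(w-1, j) q^(w-d-j)` for `0 ≤ j ≤ w-d`, where `q ≥ 2`, `d ≥ 1` and
`d ≤ w ≤ q`. Then the sequence `(a_j)` is strictly decreasing, and consequently the
alternating sum `∑_{j=0}^{w-d} (-1)^j a_j` is positive. -/
theorem stmt_19 (q d w : ℕ) (hq : 2 ≤ q) (hd : 1 ≤ d) (hdw : d ≤ w) (hwq : w ≤ q) :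
    (∀ j : ℕ, j < w - d →
      (w - 1).choose (j + 1) * q ^ (w - d - (j + 1)) < (w - 1).choose j * q ^ (w - d - j)) ∧
    0 < ∑ j ∈ Finset.range (w - d + 1),
        (-1) ^ j * ((w - 1).choose j : ℤ) * (q : ℤ) ^ (w - d - j) :=
  stmt_19_general q d w hd hwq
end
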